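/- For a pointed topological space (X, x₀), π₁^wh(X, x₀) is a topological group if and only if for every loop ζ based at x₀ and every open neighborhood U of x₀, there exists an open neighborhood V of x₀ such that for every loop η based at x₀ with image in V, the conjugate ζ·η·ζ⁻ is path-homotopic to some loop based at x₀ with image in U. -/

import Mathlib

open Set TopologicalSpace

attribute [local instance] Path.Homotopic.setoid

universe u v

variable {X : Type u} [TopologicalSpace X]

/-- The basic whisker-topology set `B([ζ],U)`: all classes of the form `[ζ·η]`
where `η` is a loop based at `x₀` with image in `U`. -/
def whiskerB {x₀ : X} (ζ : Path.Homotopic.Quotient x₀ x₀) (U : Set X) :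
    Set (Path.Homotopic.Quotient x₀ x₀) :=
  {g | ∃ η : Path x₀ x₀, Set.range η ⊆ U ∧ g = Path.Homotopic.Quotient.trans ζ ⟦η⟧}

/-- The whisker topology on `π₁(X, x₀)`, generated by the basic sets `B([ζ],U)`
for `U` an open neighborhood of `x₀`. -/
def whiskerTopology (x₀ : X) : TopologicalSpace (Path.Homotopic.Quotient x₀ x₀) :=
  TopologicalSpace.generateFrom
    {S | ∃ (ζ : Path.Homotopic.Quotient x₀ x₀) (U : Set X),
      IsOpen U ∧ x₀ ∈ U ∧ S = whiskerB ζ U}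

/-- Inversion `[ζ] ↦ [ζ⁻]` on `π₁(X, x₀)`. -/
def whiskerInv {x₀ : X} : Path.Homotopic.Quotient x₀ x₀ → Path.Homotopic.Quotient x₀ x₀ :=
  Quotient.map Path.symm (fun _ _ h => Nonempty.map Path.Homotopy.symm₂ h)

/-- `π₁^wh(X, x₀)` is a topological group: the multiplication `([ζ],[η]) ↦ [ζ·η]`
is jointly continuous and inversion `[ζ] ↦ [ζ⁻]` is continuous, with respect to
the whisker topology. -/
def IsWhiskerTopGroup (x₀ : X) : Prop :=
  letI := whiskerTopology x₀
  Continuous (fun p : Path.Homotopic.Quotient x₀ x₀ × Path.Homotopic.Quotient x₀ x₀ =>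
    Path.Homotopic.Quotient.trans p.1 p.2) ∧
  Continuous (whiskerInv (x₀ := x₀))

/-! The basic neighbourhoods `whiskerB g U = g · B(1, U)` are left translates, and each
`B(1, U)` is closed under products and inverses. So the group operations are continuous as soon
as every conjugation `g ↦ ζ g ζ⁻` is continuous at `1`, because
`a η b η' = a b (b⁻ η b) η'` and `(a η)⁻ = a⁻ (a η⁻ a⁻)`; conversely conjugation is built from
the multiplication. Read in the basis `B(1, U)`, continuity of conjugation at `1` is the stated
criterion. -/

namespace Path.Homotopic.Quotient

variable {x₀ : X}

lemma symm_symm {x₁ : X} (γ : Path.Homotopic.Quotient x₀ x₁) : γ.symm.symm = γ := by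
  induction γ with | mk γ => simp [← mk_symm]

lemma trans_symm_rev {x₁ x₂ : X} (γ : Path.Homotopic.Quotient x₀ x₁)
    (γ' : Path.Homotopic.Quotient x₁ x₂) : (γ.trans γ').symm = γ'.symm.trans γ.symm := by
  induction γ, γ' using Quotient.ind₂ with | mk γ γ' => simp [← mk_symm, ← mk_trans]

@[simp]
lemma trans_symm_cancel_left {x₁ x₂ : X} (γ : Path.Homotopic.Quotient x₀ x₁)
    (δ : Path.Homotopic.Quotient x₀ x₂) : γ.trans (γ.symm.trans δ) = δ := by
  rw [← trans_assoc, trans_symm, refl_trans]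

@[simp]
lemma symm_trans_cancel_left {x₁ x₂ : X} (γ : Path.Homotopic.Quotient x₀ x₁)
    (δ : Path.Homotopic.Quotient x₁ x₂) : γ.symm.trans (γ.trans δ) = δ := by
  rw [← trans_assoc, symm_trans, refl_trans]

noncomputable def conj (ζ g : Path.Homotopic.Quotient x₀ x₀) : Path.Homotopic.Quotient x₀ x₀ :=
  (ζ.trans g).trans ζ.symm

lemma whiskerInv_eq_symm : (whiskerInv : Path.Homotopic.Quotient x₀ x₀ → _) = symm := rfl

lemma mem_whiskerB {ζ g : Path.Homotopic.Quotient x₀ x₀} {U : Set X} :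
    g ∈ whiskerB ζ U ↔ ∃ η : Path x₀ x₀, range η ⊆ U ∧ g = ζ.trans (mk η) :=
  Iff.rfl

lemma mem_whiskerB_refl {g : Path.Homotopic.Quotient x₀ x₀} {U : Set X} :
    g ∈ whiskerB (refl x₀) U ↔ ∃ η : Path x₀ x₀, range η ⊆ U ∧ mk η = g := by
  simp [mem_whiskerB, eq_comm]

lemma self_mem_whiskerB (ζ : Path.Homotopic.Quotient x₀ x₀) {U : Set X} (hU : x₀ ∈ U) :
    ζ ∈ whiskerB ζ U :=
  ⟨Path.refl x₀, by simpa using hU, (trans_refl ζ).symm⟩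

lemma trans_mk_mem_whiskerB {ζ g : Path.Homotopic.Quotient x₀ x₀} {U : Set X}
    (hg : g ∈ whiskerB ζ U) {η : Path x₀ x₀} (hη : range η ⊆ U) :
    g.trans (mk η) ∈ whiskerB ζ U := by
  obtain ⟨η', hη', rfl⟩ := hg
  exact ⟨η'.trans η, by simpa [Path.trans_range] using ⟨hη', hη⟩, by simp⟩

lemma whiskerB_subset_of_mem {ζ g : Path.Homotopic.Quotient x₀ x₀} {U : Set X}
    (hg : g ∈ whiskerB ζ U) : whiskerB g U ⊆ whiskerB ζ U := by
  rintro _ ⟨η, hη, rfl⟩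
  exact trans_mk_mem_whiskerB hg hη

lemma whiskerB_mono (ζ : Path.Homotopic.Quotient x₀ x₀) {U V : Set X} (h : U ⊆ V) :
    whiskerB ζ U ⊆ whiskerB ζ V := by
  rintro g ⟨η, hη, rfl⟩
  exact ⟨η, hη.trans h, rfl⟩

end Path.Homotopic.Quotient

section WhiskerTopology

open Path.Homotopic.Quotient Topology Filter

attribute [local instance] whiskerTopology

variable {x₀ : X}

lemma isTopologicalBasis_whiskerB (x₀ : X) :
    IsTopologicalBasis {S | ∃ (ζ : Path.Homotopic.Quotient x₀ x₀) (U : Set X),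
      IsOpen U ∧ x₀ ∈ U ∧ S = whiskerB ζ U} := by
  refine ⟨?_, ?_, rfl⟩
  · rintro _ ⟨ζ₁, U₁, hU₁, hx₁, rfl⟩ _ ⟨ζ₂, U₂, hU₂, hx₂, rfl⟩ g ⟨hg₁, hg₂⟩
    refine ⟨whiskerB g (U₁ ∩ U₂), ⟨g, _, hU₁.inter hU₂, ⟨hx₁, hx₂⟩, rfl⟩,
      self_mem_whiskerB g ⟨hx₁, hx₂⟩, subset_inter ?_ ?_⟩
    · exact (whiskerB_mono g inter_subset_left).trans (whiskerB_subset_of_mem hg₁)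
    · exact (whiskerB_mono g inter_subset_right).trans (whiskerB_subset_of_mem hg₂)
  · exact sUnion_eq_univ_iff.2 fun g ↦
      ⟨whiskerB g univ, ⟨g, univ, isOpen_univ, trivial, rfl⟩, self_mem_whiskerB g trivial⟩

lemma hasBasis_nhds_whiskerB (g : Path.Homotopic.Quotient x₀ x₀) :
    (𝓝 g).HasBasis (fun U : Set X ↦ IsOpen U ∧ x₀ ∈ U) (whiskerB g) := by
  refine ⟨fun s ↦ (isTopologicalBasis_whiskerB x₀).mem_nhds_iff.trans ⟨?_, ?_⟩⟩
  · rintro ⟨_, ⟨ζ, U, hU, hx, rfl⟩, hg, hs⟩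
    exact ⟨U, ⟨hU, hx⟩, (whiskerB_subset_of_mem hg).trans hs⟩
  · rintro ⟨U, ⟨hU, hx⟩, hs⟩
    exact ⟨whiskerB g U, ⟨g, U, hU, hx, rfl⟩, self_mem_whiskerB g hx, hs⟩

lemma continuous_conj
    (hmul : Continuous fun p : Path.Homotopic.Quotient x₀ x₀ × Path.Homotopic.Quotient x₀ x₀ ↦
      p.1.trans p.2)
    (ζ : Path.Homotopic.Quotient x₀ x₀) : Continuous (conj ζ) :=
  hmul.comp₂ (hmul.comp₂ continuous_const continuous_id) continuous_const

lemma continuousAt_conj_refl_iff (ζ : Path.Homotopic.Quotient x₀ x₀) :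
    ContinuousAt (conj ζ) (refl x₀) ↔
      ∀ U : Set X, IsOpen U → x₀ ∈ U → ∃ V : Set X, IsOpen V ∧ x₀ ∈ V ∧
        ∀ η : Path x₀ x₀, range η ⊆ V → ∃ κ : Path x₀ x₀, range κ ⊆ U ∧ conj ζ (mk η) = mk κ := by
  have conj_refl : conj ζ (refl x₀) = refl x₀ := by simp [conj]
  rw [ContinuousAt, conj_refl,
    (hasBasis_nhds_whiskerB _).tendsto_iff (hasBasis_nhds_whiskerB _)]
  simp only [mem_whiskerB_refl, and_assoc, forall_exists_index, and_imp,
    forall_apply_eq_imp_iff₂, eq_comm (b := conj ζ _)]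

lemma continuous_trans_of_continuousAt_conj
    (hconj : ∀ ζ : Path.Homotopic.Quotient x₀ x₀, ContinuousAt (conj ζ) (refl x₀)) :
    Continuous fun p : Path.Homotopic.Quotient x₀ x₀ × Path.Homotopic.Quotient x₀ x₀ ↦
      p.1.trans p.2 := by
  refine continuous_iff_continuousAt.2 fun ⟨a, b⟩ ↦ ?_
  refine (((hasBasis_nhds_whiskerB a).prod_nhds (hasBasis_nhds_whiskerB b)).tendsto_iff
    (hasBasis_nhds_whiskerB _)).2 fun U ⟨hU, hx⟩ ↦ ?_
  obtain ⟨V, hV, hxV, hconjV⟩ := (continuousAt_conj_refl_iff b.symm).1 (hconj b.symm) U hU hx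
  refine ⟨(V, U), ⟨⟨hV, hxV⟩, hU, hx⟩, ?_⟩
  rintro ⟨_, _⟩ ⟨hg, hh⟩
  obtain ⟨η, hη, rfl⟩ := mem_whiskerB.1 hg
  obtain ⟨η', hη', rfl⟩ := mem_whiskerB.1 hh
  obtain ⟨κ, hκ, hκη⟩ := hconjV η hη
  have regroup : (a.trans (mk η)).trans (b.trans (mk η')) =
      ((a.trans b).trans (mk κ)).trans (mk η') := by
    simp [← hκη, conj, symm_symm]
  rw [regroup]
  exact trans_mk_mem_whiskerB (trans_mk_mem_whiskerB (self_mem_whiskerB _ hx) hκ) hη'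

lemma continuous_whiskerInv_of_continuousAt_conj
    (hconj : ∀ ζ : Path.Homotopic.Quotient x₀ x₀, ContinuousAt (conj ζ) (refl x₀)) :
    Continuous (whiskerInv (x₀ := x₀)) := by
  refine continuous_iff_continuousAt.2 fun a ↦ ?_
  refine ((hasBasis_nhds_whiskerB a).tendsto_iff (hasBasis_nhds_whiskerB _)).2
    fun U ⟨hU, hx⟩ ↦ ?_
  obtain ⟨V, hV, hxV, hconjV⟩ := (continuousAt_conj_refl_iff a).1 (hconj a) U hU hx
  refine ⟨V, ⟨hV, hxV⟩, ?_⟩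
  rintro _ hg
  obtain ⟨η, hη, rfl⟩ := mem_whiskerB.1 hg
  obtain ⟨κ, hκ, hκη⟩ := hconjV η.symm (by rwa [Path.symm_range])
  have regroup : whiskerInv (a.trans (mk η)) = (whiskerInv a).trans (mk κ) := by
    simp [← hκη, conj, whiskerInv_eq_symm, trans_symm_rev]
  rw [regroup]
  exact trans_mk_mem_whiskerB (self_mem_whiskerB _ hx) hκ

lemma isWhiskerTopGroup_iff_forall_continuousAt_conj (x₀ : X) :
    IsWhiskerTopGroup x₀ ↔ ∀ ζ : Path.Homotopic.Quotient x₀ x₀, ContinuousAt (conj ζ) (refl x₀) :=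
  ⟨fun h ζ ↦ (continuous_conj h.1 ζ).continuousAt, fun h ↦
    ⟨continuous_trans_of_continuousAt_conj h, continuous_whiskerInv_of_continuousAt_conj h⟩⟩

end WhiskerTopology

/-- `π₁^wh(X, x₀)` is a topological group if and only if for every loop `ζ`
based at `x₀` and every open neighborhood `U` of `x₀`, there exists an open neighborhood `V`
of `x₀` such that for every loop `η` based at `x₀` with image in `V`, the conjugate
`ζ·η·ζ⁻` is path-homotopic to a loop based at `x₀` with image in `U`. -/
theorem whisker_topGroup_iff_conjugate_criterion (x₀ : X) :
    IsWhiskerTopGroup x₀ ↔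
    ∀ ζ : Path x₀ x₀, ∀ U : Set X, IsOpen U → x₀ ∈ U →
      ∃ V : Set X, IsOpen V ∧ x₀ ∈ V ∧
        ∀ η : Path x₀ x₀, Set.range ⇑η ⊆ V →
          ∃ κ : Path x₀ x₀, Set.range ⇑κ ⊆ U ∧ ((ζ.trans η).trans ζ.symm).Homotopic κ := by
  simp only [isWhiskerTopGroup_iff_forall_continuousAt_conj,
    Path.Homotopic.Quotient.mk_surjective.forall, continuousAt_conj_refl_iff,
    Path.Homotopic.Quotient.conj, ← Path.Homotopic.Quotient.mk_symm,
    ← Path.Homotopic.Quotient.mk_trans, Path.Homotopic.Quotient.eq]
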